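/- arXiv:1807.11869 — 2 statements merged into one kernel-verified Lean document; each statement's English description precedes it below -/
import Mathlib

section
/- Suppose there is a temporal walk in a temporal star K_{1,n−1} = (G_1,...,G_L) that starts at the center s, ends at s, and visits all n vertices within L time steps. Then in the extended temporal graph G' (which contains the star vertices, plus path vertices p_0,...,p_Q, where for time steps t > L the edges {v,s} for all star vertices v and {s,p_0} are present, and at all time steps all path edges {p_j,p_{j+1}} are present), there is a temporal walk starting at s visiting all n + Q + 1 vertices within L + Q + 1 time steps. -/
/-!
Follow the star walk inside `G'` up to time `L`, when it is back at the center `s`. The edge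
`{s, p_0}` is present at time `L + 1`, and from then on the path edges carry the walk along
`p_0, …, p_Q` one vertex per step, so the path is covered by time `L + Q + 1`.
-/

namespace TemporalGraph

variable {V W : Type*}

def IsWalkStep (G : ℕ → SimpleGraph V) (w : ℕ → V) (t : ℕ) : Prop :=
  w (t + 1) = w t ∨ (G (t + 1)).Adj (w t) (w (t + 1))

theorem IsWalkStep.map {G : ℕ → SimpleGraph V} {H : ℕ → SimpleGraph W} {w : ℕ → V} {t : ℕ}
    {f : V → W} (hf : ∀ a b, (G (t + 1)).Adj a b → (H (t + 1)).Adj (f a) (f b))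
    (hw : IsWalkStep G w t) : IsWalkStep H (f ∘ w) t := by
  rcases hw with h | h
  · exact Or.inl (congrArg f h)
  · exact Or.inr (hf _ _ h)

def glue (L : ℕ) (w u : ℕ → V) (t : ℕ) : V :=
  if t ≤ L then w t else u (t - L)

theorem glue_of_le {L t : ℕ} (w u : ℕ → V) (ht : t ≤ L) : glue L w u t = w t :=
  if_pos ht

theorem glue_add {L : ℕ} {w u : ℕ → V} (hwu : w L = u 0) (k : ℕ) :
    glue L w u (L + k) = u k := by
  rcases Nat.eq_zero_or_pos k with rfl | hk
  · simpa [glue] using hwu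
  · simp [glue, show ¬L + k ≤ L by omega]

theorem isWalkStep_glue {G : ℕ → SimpleGraph V} {L M : ℕ} {w u : ℕ → V}
    (hw : ∀ t < L, IsWalkStep G w t) (hu : ∀ k < M, IsWalkStep (fun k ↦ G (L + k)) u k)
    (hwu : w L = u 0) : ∀ t < L + M, IsWalkStep G (glue L w u) t := by
  intro t ht
  by_cases htL : t < L
  · unfold IsWalkStep
    rw [glue_of_le w u htL.le, glue_of_le w u htL]
    exact hw t htL
  · obtain ⟨k, rfl⟩ := Nat.exists_eq_add_of_le (not_lt.mp htL)
    unfold IsWalkStep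
    rw [Nat.add_assoc, glue_add hwu, glue_add hwu]
    exact hu k (by omega)

def pathTour (x : V) (Q : ℕ) : ℕ → V ⊕ Fin (Q + 1)
  | 0 => Sum.inl x
  | k + 1 => Sum.inr ⟨min k Q, by omega⟩

theorem pathTour_val_add_one (x : V) (Q : ℕ) (j : Fin (Q + 1)) :
    pathTour x Q (j + 1) = Sum.inr j := by
  simp only [pathTour, Sum.inr.injEq, Fin.ext_iff]
  omega

theorem isWalkStep_pathTour {Q : ℕ} {x : V} {H : ℕ → SimpleGraph (V ⊕ Fin (Q + 1))}
    (hpath : ∀ (t : ℕ) (j : Fin Q), (H t).Adj (Sum.inr j.castSucc) (Sum.inr j.succ))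
    (hx : (H 1).Adj (Sum.inl x) (Sum.inr 0)) (k : ℕ) : IsWalkStep H (pathTour x Q) k := by
  rcases k with _ | k
  · exact Or.inr hx
  · by_cases hk : k < Q
    · right
      simpa [pathTour, Nat.min_eq_left hk.le, Nat.min_eq_left hk.nat_succ_le] using
        hpath (k + 2) ⟨k, hk⟩
    · left
      simp only [pathTour, Sum.inr.injEq, Fin.ext_iff]
      omega

end TemporalGraph

open TemporalGraph in
/-- If a temporal star has an exploration starting and ending at the center `s`
within `L` time steps, then the extended temporal graph (star plus a path
`p_0, …, p_Q`, with all star edges and the edge `{s, p_0}` present after time `L`,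
and all path edges always present) can be fully explored from `s` within
`L + Q + 1` time steps. -/
theorem star_exploration_extends {V : Type*} (L Q : ℕ)
    (s : V)
    (G : ℕ → SimpleGraph V)
    (G' : ℕ → SimpleGraph (V ⊕ Fin (Q + 1)))
    (hpath : ∀ (t : ℕ) (j : ℕ) (h : j < Q),
      (G' t).Adj (Sum.inr ⟨j, by omega⟩) (Sum.inr ⟨j + 1, by omega⟩))
    (hincl : ∀ t ≤ L, ∀ a b : V, (G t).Adj a b → (G' t).Adj (Sum.inl a) (Sum.inl b))
    (hlate : ∀ t > L, (∀ v : V, v ≠ s → (G' t).Adj (Sum.inl v) (Sum.inl s)) ∧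
      (G' t).Adj (Sum.inl s) (Sum.inr ⟨0, by omega⟩))
    -- the temporal walk in the star: starts at `s`, ends at `s`, visits everything
    (w : ℕ → V) (hw0 : w 0 = s)
    (hwstep : ∀ t < L, w (t + 1) = w t ∨ (G (t + 1)).Adj (w t) (w (t + 1)))
    (hwL : w L = s)
    (hwall : ∀ v : V, ∃ t ≤ L, w t = v) :
    ∃ w' : ℕ → (V ⊕ Fin (Q + 1)),
      w' 0 = Sum.inl s ∧
      (∀ t < L + Q + 1, w' (t + 1) = w' t ∨ (G' (t + 1)).Adj (w' t) (w' (t + 1))) ∧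
      (∀ x : V ⊕ Fin (Q + 1), ∃ t ≤ L + Q + 1, w' t = x) := by
  have hjoin : (Sum.inl ∘ w) L = pathTour s Q 0 := by simp [hwL, pathTour]
  refine ⟨glue L (Sum.inl ∘ w) (pathTour s Q), by simp [glue, hw0], ?_, ?_⟩
  · intro t ht
    exact isWalkStep_glue (M := Q + 1)
      (fun t ht ↦ IsWalkStep.map (hincl (t + 1) ht) (hwstep t ht))
      (fun k _ ↦ isWalkStep_pathTour (fun t j ↦ hpath (L + t) j j.isLt)
        (hlate (L + 1) (by omega)).2 k)
      hjoin t (by omega)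
  · rintro (v | j)
    · obtain ⟨t, ht, rfl⟩ := hwall v
      exact ⟨t, ht.trans (by omega), glue_of_le _ _ ht⟩
    · refine ⟨L + (j + 1), by omega, ?_⟩
      rw [glue_add hjoin, pathTour_val_add_one]
end

section
/- The underlying graph of the reduction construction — the graph on star vertices v_0,...,v_{n−1} and path vertices p_0,...,p_Q with edges: all star edges {v_0, v_j}, all path edges {p_j, p_{j+1}}, the edge {v_0, p_0}, and edges {v_j, p_{L·(j+2)}} for j = 0,...,n−1 — has pathwidth at most 2. -/
/-- A path decomposition of a simple graph. -/
structure PathDecomp {V : Type*} (G : SimpleGraph V) where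
  r : ℕ
  bag : Fin r → Set V
  covers_vertex : ∀ v : V, ∃ i, v ∈ bag i
  covers_edge : ∀ v w : V, G.Adj v w → ∃ i, v ∈ bag i ∧ w ∈ bag i
  interval : ∀ i j k : Fin r, i ≤ j → j ≤ k → ∀ v : V, v ∈ bag i → v ∈ bag k → v ∈ bag j

/-!
Deleting the star centre `v₀` leaves (a subgraph of) a caterpillar: the path `p₀ — ⋯ — p_Q` with
the leaf `v_j` hung on `p_{L(j+2)}`, at distinct spine vertices since `L ≥ 1`. Such a caterpillar
has a path decomposition into bags of size two, alternating `{p_k, leaf at p_k}` and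
`{p_k, p_{k+1}}`; adding `v₀` to every bag covers the deleted edges and gives width two.
-/

open Function Set SimpleGraph

namespace PathDecomp

variable {V : Type*} {G H : SimpleGraph V}

def ofLE (d : PathDecomp H) (hGH : G ≤ H) : PathDecomp G where
  r := d.r
  bag := d.bag
  covers_vertex := d.covers_vertex
  covers_edge v w hvw := d.covers_edge v w (hGH hvw)
  interval := d.interval

def insertVertex {s : V} (d : PathDecomp (G.deleteIncidenceSet s)) : PathDecomp G where
  r := d.r
  bag i := insert s (d.bag i)
  covers_vertex v := (d.covers_vertex v).imp fun _ ↦ mem_insert_of_mem s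
  covers_edge v w hvw := by
    by_cases hv : v = s
    · subst hv
      obtain ⟨i, hi⟩ := d.covers_vertex w
      exact ⟨i, mem_insert _ _, mem_insert_of_mem _ hi⟩
    by_cases hw : w = s
    · subst hw
      obtain ⟨i, hi⟩ := d.covers_vertex v
      exact ⟨i, mem_insert_of_mem _ hi, mem_insert _ _⟩
    obtain ⟨i, hvi, hwi⟩ := d.covers_edge v w (deleteIncidenceSet_adj.2 ⟨hvw, hv, hw⟩)
    exact ⟨i, mem_insert_of_mem _ hvi, mem_insert_of_mem _ hwi⟩
  interval i j k hij hjk v hvi hvk := by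
    rcases hvi with rfl | hvi
    · exact mem_insert _ _
    rcases hvk with rfl | hvk
    · exact mem_insert _ _
    exact mem_insert_of_mem _ (d.interval i j k hij hjk v hvi hvk)

end PathDecomp

namespace SimpleGraph

variable {V : Type*}

def PathwidthLE (G : SimpleGraph V) (k : ℕ) : Prop :=
  ∃ d : PathDecomp G, ∀ i, (d.bag i).ncard ≤ k + 1

variable {G H : SimpleGraph V} {k : ℕ}

theorem exists_mem_of_fromRel_adj {ι : Type*} {B : ι → Set V} {r : V → V → Prop}
    (h : ∀ v w, r v w → ∃ i, v ∈ B i ∧ w ∈ B i) {v w : V} (hvw : (fromRel r).Adj v w) :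
    ∃ i, v ∈ B i ∧ w ∈ B i := by
  obtain ⟨-, hvw | hwv⟩ := hvw
  exacts [h v w hvw, (h w v hwv).imp fun _ ↦ And.symm]

theorem deleteIncidenceSet_fromRel_le {r r' : V → V → Prop} {s : V}
    (h : ∀ v w, v ≠ s → w ≠ s → r v w → r' v w) :
    (fromRel r).deleteIncidenceSet s ≤ fromRel r' := by
  intro v w hvw
  obtain ⟨⟨hne, hvw | hwv⟩, hv, hw⟩ := deleteIncidenceSet_adj.1 hvw
  exacts [⟨hne, .inl (h v w hv hw hvw)⟩, ⟨hne, .inr (h w v hw hv hwv)⟩]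

theorem PathwidthLE.mono (h : H.PathwidthLE k) (hGH : G ≤ H) : G.PathwidthLE k :=
  let ⟨d, hd⟩ := h
  ⟨d.ofLE hGH, hd⟩

theorem PathwidthLE.of_deleteIncidenceSet {s : V} (h : (G.deleteIncidenceSet s).PathwidthLE k) :
    G.PathwidthLE (k + 1) :=
  let ⟨d, hd⟩ := h
  ⟨d.insertVertex, fun i ↦ (ncard_insert_le _ _).trans (Nat.add_le_add_right (hd i) 1)⟩

section Caterpillar

variable {α : Type*} {m : ℕ} (f : α → Fin (m + 1))

def caterpillar : SimpleGraph (α ⊕ Fin (m + 1)) :=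
  fromRel fun x y ↦
    (∃ i j : Fin (m + 1), x = .inr i ∧ y = .inr j ∧ i.val + 1 = j.val) ∨
    ∃ a, x = .inl a ∧ y = .inr (f a)

-- Bag `2 * k` holds the spine vertex `k` and the leaf hung on it, bag `2 * k + 1` the spine edge
-- from `k` to `k + 1`.
def caterpillarBag (i : ℕ) : Set (α ⊕ Fin (m + 1)) :=
  {x | Sum.elim (fun a ↦ 2 * (f a : ℕ) = i) (fun k ↦ 2 * (k : ℕ) ≤ i + 1 ∧ i ≤ 2 * k + 1) x}

@[simp]
theorem inl_mem_caterpillarBag {i : ℕ} {a : α} :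
    .inl a ∈ caterpillarBag f i ↔ 2 * (f a : ℕ) = i := Iff.rfl

@[simp]
theorem inr_mem_caterpillarBag {i : ℕ} {k : Fin (m + 1)} :
    .inr k ∈ caterpillarBag f i ↔ 2 * (k : ℕ) ≤ i + 1 ∧ i ≤ 2 * k + 1 := Iff.rfl

-- `slot` separates the left spine vertex of a bag (`2 * k ≤ i`) from its other member.
theorem ncard_caterpillarBag_le (hf : Injective f) (i : ℕ) : (caterpillarBag f i).ncard ≤ 2 := by
  let slot : α ⊕ Fin (m + 1) → Bool := Sum.elim (fun _ ↦ false) fun k ↦ decide (2 * (k : ℕ) ≤ i)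
  have hslot : InjOn slot (caterpillarBag f i) := by
    rintro (a | k) hx (b | l) hy hxy <;>
      simp_all only [slot, inl_mem_caterpillarBag, inr_mem_caterpillarBag, Sum.elim_inl,
        Sum.elim_inr, Sum.inl.injEq, Sum.inr.injEq, decide_eq_decide, false_eq_decide_iff,
        decide_eq_false_iff_not, not_le, reduceCtorEq]
    · exact hf (Fin.ext (by omega))
    · omega
    · omega
    · exact Fin.ext (by omega)
  calc (caterpillarBag f i).ncard ≤ (univ : Set Bool).ncard :=
        ncard_le_ncard_of_injOn slot (fun _ _ ↦ mem_univ _) hslot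
    _ = 2 := by simp

def caterpillarPathDecomp : PathDecomp (caterpillar f) where
  r := 2 * m + 1
  bag i := caterpillarBag f i
  covers_vertex
    | .inl a => ⟨⟨2 * f a, by omega⟩, rfl⟩
    | .inr k => ⟨⟨2 * k, by omega⟩, by simp⟩
  covers_edge _ _ := exists_mem_of_fromRel_adj <| by
    rintro _ _ (⟨k, l, rfl, rfl, hkl⟩ | ⟨a, rfl, rfl⟩)
    · exact ⟨⟨2 * k + 1, by omega⟩, by simp only [inr_mem_caterpillarBag]; omega⟩
    · exact ⟨⟨2 * f a, by omega⟩, by simp⟩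
  interval i j k hij hjk v hvi hvk := by
    rw [Fin.le_def] at hij hjk
    rcases v with a | l <;>
      simp_all only [Fin.val_fin_le, inl_mem_caterpillarBag, inr_mem_caterpillarBag] <;> omega

theorem caterpillar_pathwidthLE_one (hf : Injective f) : (caterpillar f).PathwidthLE 1 :=
  ⟨caterpillarPathDecomp f, fun i ↦ ncard_caterpillarBag_le f hf i⟩

end Caterpillar

end SimpleGraph

/-- The underlying graph of the reduction (star edges `{v_0, v_j}`, path edges
`{p_j, p_{j+1}}`, the edge `{v_0, p_0}`, and the attachment edges
`{v_j, p_{L·(j+2)}}`) has pathwidth at most 2. -/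
theorem underlying_graph_pathwidth_le_two (L n Q : ℕ) (hL : 1 ≤ L) (hn : 1 ≤ n)
    (hQ : Q = L * (n + 3))
    (G : SimpleGraph (Fin n ⊕ Fin (Q + 1)))
    (hG : G = SimpleGraph.fromRel (fun x y =>
      (∃ j : Fin n, x = Sum.inl ⟨0, by omega⟩ ∧ y = Sum.inl j) ∨
      (∃ i j : Fin (Q + 1), x = Sum.inr i ∧ y = Sum.inr j ∧ i.val + 1 = j.val) ∨
      (x = Sum.inl ⟨0, by omega⟩ ∧ y = Sum.inr ⟨0, by omega⟩) ∨
      (∃ j : Fin n, x = Sum.inl j ∧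
        y = Sum.inr ⟨L * (j.val + 2), by nlinarith [j.isLt]⟩))) :
    ∃ d : PathDecomp G, ∀ i, Set.ncard (d.bag i) ≤ 2 + 1 := by
  let attach (j : Fin n) : Fin (Q + 1) := ⟨L * (j + 2), by nlinarith [j.isLt]⟩
  have h_attach : Injective attach := fun i j hij ↦
    Fin.ext <| Nat.add_right_cancel <| Nat.eq_of_mul_eq_mul_left hL (Fin.val_eq_of_eq hij)
  have h_le : G.deleteIncidenceSet (.inl ⟨0, by omega⟩) ≤ caterpillar attach := by
    subst hG
    refine deleteIncidenceSet_fromRel_le ?_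
    rintro v w hv - (⟨j, rfl, rfl⟩ | hspine | ⟨rfl, rfl⟩ | ⟨j, rfl, rfl⟩)
    · exact absurd rfl hv
    · exact .inl hspine
    · exact absurd rfl hv
    · exact .inr ⟨j, rfl, rfl⟩
  exact ((caterpillar_pathwidthLE_one attach h_attach).mono h_le).of_deleteIncidenceSet
end
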